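/- arXiv:1708.01570 — 4 statements merged into one kernel-verified Lean document; each statement's English description precedes it below -/
import Mathlib

section
/- (Clarkson inequality, part 1) Let 1 < p < ∞, let p′ = p/(p−1) be the conjugate index, set r = min(p, p′) and r′ = r/(r−1). Then for all x, y ∈ ℓ_p: 2(‖x‖_p^{r′} + ‖y‖_p^{r′}) ≤ ‖x+y‖_p^{r′} + ‖x−y‖_p^{r′} ≤ 2^{r′−1}(‖x‖_p^{r′} + ‖y‖_p^{r′}). -/
/-!
Since `r' = max p p'`, the upper inequality is Clarkson's inequality with exponent `p` when `p ≥ 2`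
and with exponent `p'` when `p ≤ 2`; the lower one follows by applying the upper one to `x + y`
and `x - y`.

For `p ≥ 2` the upper inequality holds coordinatewise, by convexity of `t ↦ t ^ (p / 2)` and
`(a + b)² + (a - b)² = 2 (a² + b²)`.

For `p ≤ 2` it rests on the two-point inequality
`(|a + b| ^ p' + |a - b| ^ p') ^ (p - 1) ≤ 2 ^ (p - 1) (|a| ^ p + |b| ^ p)`, i.e. on the bound
`2 ^ (1 / p')` for the norm of `(a, b) ↦ (a + b, a - b)` from `ℓ^p` to `ℓ^p'`. This is the
Riesz–Thorin argument: Hadamard's three lines theorem interpolates between the norm `1` from `ℓ¹`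
to `ℓ^∞` and the norm `√2` from `ℓ²` to `ℓ²`. The coordinates are summed in `ℓ^(p - 1)`, where
`0 < p - 1 ≤ 1` reverses Minkowski's inequality, and a power-mean inequality finishes.
-/

open scoped ENNReal

theorem Real.rpow_add_le_mul_rpow_add_rpow {u v t : ℝ} (hu : 0 ≤ u) (hv : 0 ≤ v) (ht : 1 ≤ t) :
    (u + v) ^ t ≤ 2 ^ (t - 1) * (u ^ t + v ^ t) := by
  lift u to NNReal using hu
  lift v to NNReal using hv
  exact_mod_cast NNReal.rpow_add_le_mul_rpow_add_rpow u v ht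

theorem Real.rpow_le_max_one_rpow {t σ c : ℝ} (ht : 0 ≤ t) (hσ : 0 ≤ σ) (hσc : σ ≤ c) :
    t ^ σ ≤ max 1 (t ^ c) := by
  rcases le_total t 1 with h | h
  · exact le_max_of_le_left (Real.rpow_le_one ht h hσ)
  · exact le_max_of_le_right (Real.rpow_le_rpow_of_exponent_le h hσc)

theorem Real.HolderConjugate.two_le_iff {p q : ℝ} (h : p.HolderConjugate q) : 2 ≤ q ↔ p ≤ 2 := by
  have := h.mul_eq_add
  have := h.lt
  have := h.symm.lt
  constructor <;> intro <;> nlinarith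

theorem abs_add_rpow_add_abs_sub_rpow_le {p : ℝ} (hp : 2 ≤ p) (a b : ℝ) :
    |a + b| ^ p + |a - b| ^ p ≤ 2 ^ (p - 1) * (|a| ^ p + |b| ^ p) := by
  have hp2 : 1 ≤ p / 2 := by linarith
  have h2 : ∀ t : ℝ, |t| ^ p = (t ^ 2) ^ (p / 2) := fun t => by
    rw [← sq_abs, ← Real.rpow_natCast, ← Real.rpow_mul (abs_nonneg t)]; ring_nf
  simp only [h2]
  calc ((a + b) ^ 2) ^ (p / 2) + ((a - b) ^ 2) ^ (p / 2)
      ≤ ((a + b) ^ 2 + (a - b) ^ 2) ^ (p / 2) :=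
        Real.add_rpow_le_rpow_add (by positivity) (by positivity) hp2
    _ = 2 ^ (p / 2) * (a ^ 2 + b ^ 2) ^ (p / 2) := by
        rw [← Real.mul_rpow zero_le_two (by positivity)]; ring_nf
    _ ≤ 2 ^ (p / 2) * (2 ^ (p / 2 - 1) * ((a ^ 2) ^ (p / 2) + (b ^ 2) ^ (p / 2))) := by
        gcongr
        exact Real.rpow_add_le_mul_rpow_add_rpow (by positivity) (by positivity) hp2
    _ = 2 ^ (p - 1) * ((a ^ 2) ^ (p / 2) + (b ^ 2) ^ (p / 2)) := by
        rw [← mul_assoc, ← Real.rpow_add two_pos]; ring_nf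

-- Concavity of `t ↦ t ^ s` at `x / A` and `y / B` with weights `A / (A + B)` and `B / (A + B)`.
theorem Real.rpow_sub_one_mul_add_le_add_rpow {s A B x y : ℝ} (hs0 : 0 ≤ s) (hs1 : s ≤ 1)
    (hA : 0 < A) (hB : 0 < B) (hx : 0 ≤ x) (hy : 0 ≤ y) :
    (A + B) ^ (s - 1) * (A ^ (1 - s) * x ^ s + B ^ (1 - s) * y ^ s) ≤ (x + y) ^ s := by
  have hC : 0 < A + B := add_pos hA hB
  have key := (Real.concaveOn_rpow hs0 hs1).2 (show 0 ≤ x / A by positivity)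
    (show 0 ≤ y / B by positivity) (show 0 ≤ A / (A + B) by positivity)
    (show 0 ≤ B / (A + B) by positivity) (by field_simp)
  have hxy : A / (A + B) * (x / A) + B / (A + B) * (y / B) = (x + y) / (A + B) := by
    field_simp
  simp only [smul_eq_mul] at key
  rw [hxy, Real.div_rpow (by positivity) hC.le, Real.div_rpow hx hA.le, Real.div_rpow hy hB.le,
    le_div_iff₀ (by positivity)] at key
  refine (le_of_eq ?_).trans key
  rw [Real.rpow_sub_one hC.ne', Real.rpow_sub hA, Real.rpow_sub hB, Real.rpow_one, Real.rpow_one]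
  field_simp

theorem Real.summable_add_rpow {ι : Type*} {f g : ι → ℝ} {s : ℝ} (hs0 : 0 ≤ s) (hs1 : s ≤ 1)
    (hf : ∀ i, 0 ≤ f i) (hg : ∀ i, 0 ≤ g i) (hf_sum : Summable fun i => f i ^ s)
    (hg_sum : Summable fun i => g i ^ s) : Summable fun i => (f i + g i) ^ s :=
  (hf_sum.add hg_sum).of_nonneg_of_le (fun i => by have := hf i; have := hg i; positivity)
    (fun i => Real.rpow_add_le_add_rpow (hf i) (hg i) hs0 hs1)

theorem Real.rpow_add_le_tsum_add_rpow {ι : Type*} {f g : ι → ℝ} {s A B : ℝ} (hs0 : 0 ≤ s)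
    (hs1 : s ≤ 1) (hA : 0 < A) (hB : 0 < B) (hf : ∀ i, 0 ≤ f i) (hg : ∀ i, 0 ≤ g i)
    (hf_sum : Summable fun i => f i ^ s) (hg_sum : Summable fun i => g i ^ s)
    (hfA : ∑' i, f i ^ s = A ^ s) (hgB : ∑' i, g i ^ s = B ^ s) :
    (A + B) ^ s ≤ ∑' i, (f i + g i) ^ s :=
  calc (A + B) ^ s = (A + B) ^ (s - 1) * (A ^ (1 - s) * A ^ s + B ^ (1 - s) * B ^ s) := by
        rw [← Real.rpow_add hA, ← Real.rpow_add hB, sub_add_cancel, Real.rpow_one, Real.rpow_one,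
          Real.rpow_sub_one (add_pos hA hB).ne', div_mul_cancel₀ _ (add_pos hA hB).ne']
    _ = ∑' i, (A + B) ^ (s - 1) * (A ^ (1 - s) * f i ^ s + B ^ (1 - s) * g i ^ s) := by
        rw [← hfA, ← hgB, tsum_mul_left, (hf_sum.mul_left _).tsum_add (hg_sum.mul_left _),
          tsum_mul_left, tsum_mul_left]
    _ ≤ ∑' i, (f i + g i) ^ s :=
        (((hf_sum.mul_left _).add (hg_sum.mul_left _)).mul_left _).tsum_le_tsum
          (fun i => Real.rpow_sub_one_mul_add_le_add_rpow hs0 hs1 hA hB (hf i) (hg i))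
          (Real.summable_add_rpow hs0 hs1 hf hg hf_sum hg_sum)

theorem Real.Lp_add_ge_tsum_of_nonneg {ι : Type*} {f g : ι → ℝ} {s : ℝ} (hs0 : 0 < s)
    (hs1 : s ≤ 1) (hf : ∀ i, 0 ≤ f i) (hg : ∀ i, 0 ≤ g i) (hf_sum : Summable fun i => f i ^ s)
    (hg_sum : Summable fun i => g i ^ s) :
    (∑' i, f i ^ s) ^ (1 / s) + (∑' i, g i ^ s) ^ (1 / s) ≤ (∑' i, (f i + g i) ^ s) ^ (1 / s) := by
  have hmono : ∀ h : ι → ℝ, (∀ i, 0 ≤ h i) → (∀ i, h i ≤ f i + g i) →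
      Summable (fun i => h i ^ s) →
      (∑' i, h i ^ s) ^ (1 / s) ≤ (∑' i, (f i + g i) ^ s) ^ (1 / s) := fun h h0 hle hsum =>
    Real.rpow_le_rpow (tsum_nonneg fun i => by have := h0 i; positivity)
      (hsum.tsum_le_tsum (fun i => Real.rpow_le_rpow (h0 i) (hle i) hs0.le)
        (Real.summable_add_rpow hs0.le hs1 hf hg hf_sum hg_sum))
      (by positivity)
  have hpow : ∀ {h : ι → ℝ}, (∀ i, 0 ≤ h i) →
      ∑' i, h i ^ s = ((∑' i, h i ^ s) ^ (1 / s)) ^ s := fun h0 => by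
    rw [← Real.rpow_mul (tsum_nonneg fun i => by have := h0 i; positivity),
      one_div_mul_cancel hs0.ne', Real.rpow_one]
  have hnonneg : ∀ {h : ι → ℝ}, (∀ i, 0 ≤ h i) → 0 ≤ (∑' i, h i ^ s) ^ (1 / s) :=
    fun h0 => Real.rpow_nonneg (tsum_nonneg fun i => by have := h0 i; positivity) _
  set A := (∑' i, f i ^ s) ^ (1 / s)
  set B := (∑' i, g i ^ s) ^ (1 / s)
  have hA0 : 0 ≤ A := hnonneg hf
  have hB0 : 0 ≤ B := hnonneg hg
  rcases hA0.eq_or_lt with hA | hA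
  · rw [← hA, zero_add]
    exact hmono g hg (fun i => le_add_of_nonneg_left (hf i)) hg_sum
  rcases hB0.eq_or_lt with hB | hB
  · rw [← hB, add_zero]
    exact hmono f hf (fun i => le_add_of_nonneg_right (hg i)) hf_sum
  calc A + B = ((A + B) ^ s) ^ (1 / s) := by
        rw [← Real.rpow_mul (add_pos hA hB).le, mul_one_div_cancel hs0.ne', Real.rpow_one]
    _ ≤ _ := Real.rpow_le_rpow (by positivity)
        (Real.rpow_add_le_tsum_add_rpow hs0.le hs1 hA hB hf hg hf_sum hg_sum (hpow hf) (hpow hg))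
        (by positivity)

/-- `⟨η, T ξ⟩` for `T = !![1, 1; 1, -1]`. -/
def sumDiffPairing (η₁ η₂ ξ₁ ξ₂ : ℂ) : ℂ := η₁ * (ξ₁ + ξ₂) + η₂ * (ξ₁ - ξ₂)

theorem norm_sumDiffPairing_le_add (η₁ η₂ ξ₁ ξ₂ : ℂ) :
    ‖sumDiffPairing η₁ η₂ ξ₁ ξ₂‖ ≤ ‖η₁‖ * ‖ξ₁ + ξ₂‖ + ‖η₂‖ * ‖ξ₁ - ξ₂‖ := by
  simpa only [sumDiffPairing, norm_mul] using norm_add_le (η₁ * (ξ₁ + ξ₂)) (η₂ * (ξ₁ - ξ₂))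

theorem norm_sumDiffPairing_le (η₁ η₂ ξ₁ ξ₂ : ℂ) :
    ‖sumDiffPairing η₁ η₂ ξ₁ ξ₂‖ ≤ (‖η₁‖ + ‖η₂‖) * (‖ξ₁‖ + ‖ξ₂‖) := by
  calc _ ≤ ‖η₁‖ * ‖ξ₁ + ξ₂‖ + ‖η₂‖ * ‖ξ₁ - ξ₂‖ := norm_sumDiffPairing_le_add _ _ _ _
    _ ≤ ‖η₁‖ * (‖ξ₁‖ + ‖ξ₂‖) + ‖η₂‖ * (‖ξ₁‖ + ‖ξ₂‖) := by
        gcongr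
        exacts [norm_add_le _ _, norm_sub_le _ _]
    _ = _ := by ring

theorem norm_sumDiffPairing_sq_le (η₁ η₂ ξ₁ ξ₂ : ℂ) :
    ‖sumDiffPairing η₁ η₂ ξ₁ ξ₂‖ ^ 2 ≤ 2 * ((‖η₁‖ ^ 2 + ‖η₂‖ ^ 2) * (‖ξ₁‖ ^ 2 + ‖ξ₂‖ ^ 2)) := by
  have htri := norm_sumDiffPairing_le_add η₁ η₂ ξ₁ ξ₂
  have hpar := parallelogram_law_with_norm ℂ ξ₁ ξ₂
  nlinarith [norm_nonneg (sumDiffPairing η₁ η₂ ξ₁ ξ₂),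
    sq_nonneg (‖η₁‖ * ‖ξ₁ - ξ₂‖ - ‖η₂‖ * ‖ξ₁ + ξ₂‖)]

/-- `signedPow a w = sign a * |a| ^ w`, written so that it is visibly holomorphic in `w`. -/
noncomputable def signedPow (a : ℝ) (w : ℂ) : ℂ := a * ((|a| : ℝ) : ℂ) ^ (w - 1)

theorem norm_signedPow_le (a : ℝ) (w : ℂ) : ‖signedPow a w‖ ≤ |a| ^ w.re := by
  rcases eq_or_ne a 0 with rfl | ha
  · simp [signedPow, Real.rpow_nonneg]
  have ha' : 0 < |a| := abs_pos.2 ha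
  rw [signedPow, norm_mul, Complex.norm_real, Real.norm_eq_abs,
    Complex.norm_cpow_eq_rpow_re_of_pos ha', Complex.sub_re, Complex.one_re,
    Real.rpow_sub_one ha'.ne', mul_div_cancel₀ _ ha'.ne']

theorem signedPow_one (a : ℝ) : signedPow a 1 = a := by
  simp [signedPow]

theorem mul_signedPow_ofReal (a : ℝ) {t : ℝ} (ht : t + 1 ≠ 0) :
    a * signedPow a t = ((|a| ^ (t + 1) : ℝ) : ℂ) := by
  rcases eq_or_ne a 0 with rfl | ha
  · simp [signedPow, Real.zero_rpow ht]
  have ha' : 0 < |a| := abs_pos.2 ha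
  rw [signedPow, ← Complex.ofReal_one, ← Complex.ofReal_sub, ← Complex.ofReal_cpow ha'.le,
    ← mul_assoc, ← Complex.ofReal_mul, ← Complex.ofReal_mul, ← abs_mul_abs_self,
    Real.rpow_add ha', Real.rpow_sub_one ha'.ne', Real.rpow_one]
  congr 1
  field_simp

theorem Differentiable.signedPow (a : ℝ) {e : ℂ → ℂ} (he : Differentiable ℂ e) :
    Differentiable ℂ fun z => signedPow a (e z) := by
  rcases eq_or_ne a 0 with rfl | ha
  · simp [_root_.signedPow, differentiable_const]
  exact (differentiable_const _).mul ((he.sub_const 1).const_cpow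
    (Or.inl (by exact_mod_cast (abs_pos.2 ha).ne')))

noncomputable def clarksonWeight (p q a b : ℝ) : ℝ :=
  (|a + b| ^ q + |a - b| ^ q) * (|a| ^ p + |b| ^ p)

-- The Riesz–Thorin family for `(a, b) ↦ (a + b, a - b)`, tested against the extremal dual vector
-- `sign (a ± b) |a ± b| ^ (q - 1)`, which it reaches at `w = 1 / p`.
noncomputable def clarksonInterpolant (p q a b : ℝ) (w : ℂ) : ℂ :=
  (clarksonWeight p q a b : ℂ) ^ (-w) *
    sumDiffPairing (signedPow (a + b) (q * w)) (signedPow (a - b) (q * w))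
      (signedPow a (p * w)) (signedPow b (p * w))

section clarksonInterpolant

variable {p q a b : ℝ}

theorem clarksonWeight_pos (hab : a ≠ 0 ∨ b ≠ 0) : 0 < clarksonWeight p q a b := by
  have hpos : ∀ {s t : ℝ}, s ≠ 0 ∨ t ≠ 0 → ∀ r : ℝ, 0 < |s| ^ r + |t| ^ r := by
    rintro s t (hs | ht) r
    · exact add_pos_of_pos_of_nonneg (Real.rpow_pos_of_pos (abs_pos.2 hs) r) (by positivity)
    · exact add_pos_of_nonneg_of_pos (by positivity) (Real.rpow_pos_of_pos (abs_pos.2 ht) r)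
  refine mul_pos (hpos ?_ q) (hpos hab p)
  by_contra! h
  exact hab.elim (fun ha => ha (by linarith [h.1, h.2])) (fun hb => hb (by linarith [h.1, h.2]))

theorem differentiable_clarksonInterpolant (hM : 0 < clarksonWeight p q a b) :
    Differentiable ℂ (clarksonInterpolant p q a b) := by
  have hlin : ∀ c : ℝ, Differentiable ℂ fun w : ℂ => (c : ℂ) * w :=
    fun c => differentiable_id.const_mul _
  exact (differentiable_neg.const_cpow (Or.inl (by exact_mod_cast hM.ne'))).mul
    ((((hlin q).signedPow _).mul (((hlin p).signedPow _).add ((hlin p).signedPow _))).add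
      (((hlin q).signedPow _).mul (((hlin p).signedPow _).sub ((hlin p).signedPow _))))

theorem norm_clarksonInterpolant_le (hM : 0 < clarksonWeight p q a b) (w : ℂ) :
    ‖clarksonInterpolant p q a b w‖ ≤ clarksonWeight p q a b ^ (-w.re) *
      ((|a + b| ^ (q * w.re) + |a - b| ^ (q * w.re)) * (|a| ^ (p * w.re) + |b| ^ (p * w.re))) := by
  rw [clarksonInterpolant, norm_mul, Complex.norm_cpow_eq_rpow_re_of_pos hM, Complex.neg_re]
  gcongr
  refine (norm_sumDiffPairing_le _ _ _ _).trans ?_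
  simp only [← Complex.re_ofReal_mul]
  gcongr <;> exact norm_signedPow_le _ _

theorem norm_clarksonInterpolant_le_one (hM : 0 < clarksonWeight p q a b) {w : ℂ}
    (hw : w.re = 1) : ‖clarksonInterpolant p q a b w‖ ≤ 1 := by
  refine (norm_clarksonInterpolant_le hM w).trans_eq ?_
  rw [hw, mul_one, mul_one, ← clarksonWeight, Real.rpow_neg_one, inv_mul_cancel₀ hM.ne']

theorem norm_clarksonInterpolant_le_sqrt_two (hM : 0 < clarksonWeight p q a b) {w : ℂ}
    (hw : w.re = 1 / 2) : ‖clarksonInterpolant p q a b w‖ ≤ √2 := by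
  have hsq : ∀ c r : ℝ, ‖signedPow c (r * w)‖ ^ 2 ≤ |c| ^ r := fun c r => by
    calc _ ≤ (|c| ^ (r / 2)) ^ 2 := by
          gcongr
          simpa [hw, div_eq_mul_inv] using norm_signedPow_le c (r * w)
      _ = |c| ^ r := by rw [← Real.rpow_mul_natCast (abs_nonneg c)]; ring_nf
  have hM' : (clarksonWeight p q a b ^ (-(1 / 2 : ℝ))) ^ 2 = (clarksonWeight p q a b)⁻¹ := by
    rw [← Real.rpow_mul_natCast hM.le, ← Real.rpow_neg_one]; norm_num
  rw [Real.le_sqrt (norm_nonneg _) zero_le_two, clarksonInterpolant, norm_mul, mul_pow,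
    Complex.norm_cpow_eq_rpow_re_of_pos hM, Complex.neg_re, hw, hM']
  calc _ ≤ (clarksonWeight p q a b)⁻¹ *
        (2 * ((|a + b| ^ q + |a - b| ^ q) * (|a| ^ p + |b| ^ p))) := by
        gcongr
        refine (norm_sumDiffPairing_sq_le _ _ _ _).trans ?_
        gcongr <;> apply hsq
    _ = 2 := by rw [← clarksonWeight, mul_left_comm, inv_mul_cancel₀ hM.ne', mul_one]

theorem bddAbove_norm_clarksonInterpolant (hM : 0 < clarksonWeight p q a b) (hp : 0 ≤ p)
    (hq : 0 ≤ q) :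
    BddAbove ((norm ∘ clarksonInterpolant p q a b) ''
      Complex.HadamardThreeLines.verticalClosedStrip (1 / 2) 1) := by
  refine ⟨max 1 (clarksonWeight p q a b)⁻¹ *
    ((max 1 (|a + b| ^ q) + max 1 (|a - b| ^ q)) * (max 1 (|a| ^ p) + max 1 (|b| ^ p))), ?_⟩
  rintro _ ⟨w, ⟨hw₀, hw₁⟩, rfl⟩
  have hw₀' : 0 ≤ w.re := by linarith
  have hle : ∀ {t : ℝ} (c : ℝ), 0 ≤ t → 0 ≤ c → t ^ (c * w.re) ≤ max 1 (t ^ c) :=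
    fun c ht hc => Real.rpow_le_max_one_rpow ht (by positivity) (mul_le_of_le_one_right hc hw₁)
  refine (norm_clarksonInterpolant_le hM w).trans ?_
  rw [Real.rpow_neg hM.le, ← Real.inv_rpow hM.le]
  gcongr
  · simpa using hle 1 (inv_nonneg.2 hM.le) zero_le_one
  all_goals exact hle _ (abs_nonneg _) ‹_›

theorem clarksonInterpolant_inv (hpq : p.HolderConjugate q) :
    clarksonInterpolant p q a b (p⁻¹ : ℝ) =
      ((clarksonWeight p q a b ^ (-p⁻¹) * (|a + b| ^ q + |a - b| ^ q) : ℝ) : ℂ) := by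
  have hpp : (p : ℂ) * (p⁻¹ : ℝ) = 1 := by
    rw [← Complex.ofReal_mul, mul_inv_cancel₀ hpq.ne_zero, Complex.ofReal_one]
  have hqp : (q : ℂ) * (p⁻¹ : ℝ) = (q - 1 : ℝ) := by
    rw [← Complex.ofReal_mul, ← div_eq_mul_inv, hpq.symm.div_conj_eq_sub_one]
  have hM : 0 ≤ clarksonWeight p q a b := by unfold clarksonWeight; positivity
  have hq : q - 1 + 1 ≠ 0 := by linarith [hpq.symm.pos]
  rw [clarksonInterpolant, hpp, hqp, signedPow_one, signedPow_one, sumDiffPairing,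
    mul_comm (signedPow (a + b) _), mul_comm (signedPow (a - b) _), ← Complex.ofReal_add,
    ← Complex.ofReal_sub, mul_signedPow_ofReal _ hq, mul_signedPow_ofReal _ hq, sub_add_cancel,
    ← Complex.ofReal_neg, ← Complex.ofReal_cpow hM]
  norm_cast

end clarksonInterpolant

theorem abs_add_rpow_add_abs_sub_rpow_rpow_le {p q : ℝ} (hpq : p.HolderConjugate q) (hp : p ≤ 2)
    (a b : ℝ) : (|a + b| ^ q + |a - b| ^ q) ^ (p - 1) ≤ 2 ^ (p - 1) * (|a| ^ p + |b| ^ p) := by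
  have hp1 := hpq.sub_one_pos
  by_cases hab : a = 0 ∧ b = 0
  · obtain ⟨rfl, rfl⟩ := hab
    simp [Real.zero_rpow hpq.ne_zero, Real.zero_rpow hpq.symm.ne_zero, Real.zero_rpow hp1.ne']
  have hM := clarksonWeight_pos (p := p) (q := q) (not_and_or.1 hab)
  have hθ : ((p⁻¹ : ℝ) : ℂ) ∈ Complex.HadamardThreeLines.verticalClosedStrip (1 / 2) 1 := by
    simp only [Complex.HadamardThreeLines.verticalClosedStrip, Set.mem_preimage,
      Complex.ofReal_re, Set.mem_Icc, one_div]
    exact ⟨inv_anti₀ hpq.pos hp, inv_le_one_of_one_le₀ hpq.lt.le⟩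
  have h3 := Complex.HadamardThreeLines.norm_le_interp_of_mem_verticalClosedStrip'
    (by norm_num) hθ (differentiable_clarksonInterpolant hM).diffContOnCl
    (bddAbove_norm_clarksonInterpolant hM hpq.nonneg hpq.symm.nonneg)
    (fun _ hz => norm_clarksonInterpolant_le_sqrt_two hM hz)
    (fun _ hz => norm_clarksonInterpolant_le_one hM hz)
  rw [clarksonInterpolant_inv hpq, Complex.norm_real, Real.norm_of_nonneg (by positivity),
    Complex.ofReal_re, Real.one_rpow, mul_one] at h3
  set T := |a + b| ^ q + |a - b| ^ q
  set N := |a| ^ p + |b| ^ p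
  have hT : 0 < T := pos_of_mul_pos_left hM (by positivity)
  have hsqrt : √2 ^ (1 - (p⁻¹ - 1 / 2) / (1 - 1 / 2)) = 2 ^ q⁻¹ := by
    rw [Real.sqrt_eq_rpow, ← Real.rpow_mul zero_le_two, ← hpq.one_sub_inv]; ring_nf
  have hpow := Real.rpow_le_rpow (by positivity) (h3.trans_eq hsqrt) hpq.nonneg
  rw [Real.mul_rpow (by positivity) hT.le, ← Real.rpow_mul hM.le, ← Real.rpow_mul zero_le_two,
    neg_mul, inv_mul_cancel₀ hpq.ne_zero, Real.rpow_neg_one, inv_mul_eq_div, ← div_eq_inv_mul,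
    hpq.div_conj_eq_sub_one, clarksonWeight, ← div_div, ← Real.rpow_sub_one hT.ne'] at hpow
  exact (div_le_iff₀ (pos_of_mul_pos_right hM (by positivity))).1 hpow

namespace lp

variable {ι : Type*} {p : ℝ≥0∞}

theorem norm_rpow_eq_tsum_abs (hp : 0 < p.toReal) (x : lp (fun _ : ι => ℝ) p) :
    ‖x‖ ^ p.toReal = ∑' i, |x i| ^ p.toReal := by
  simpa only [Real.norm_eq_abs] using norm_rpow_eq_tsum hp x

theorem summable_abs_rpow (hp : 0 < p.toReal) (x : lp (fun _ : ι => ℝ) p) :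
    Summable fun i => |x i| ^ p.toReal := by
  simpa only [Real.norm_eq_abs] using (lp.memℓp x).summable hp

theorem norm_add_rpow_add_norm_sub_rpow_le (hp : 2 ≤ p.toReal) (x y : lp (fun _ : ι => ℝ) p) :
    ‖x + y‖ ^ p.toReal + ‖x - y‖ ^ p.toReal ≤
      2 ^ (p.toReal - 1) * (‖x‖ ^ p.toReal + ‖y‖ ^ p.toReal) := by
  have hp0 : 0 < p.toReal := by linarith
  simp only [norm_rpow_eq_tsum_abs hp0]
  rw [← (summable_abs_rpow hp0 _).tsum_add (summable_abs_rpow hp0 _),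
    ← (summable_abs_rpow hp0 _).tsum_add (summable_abs_rpow hp0 _), ← tsum_mul_left]
  refine ((summable_abs_rpow hp0 _).add (summable_abs_rpow hp0 _)).tsum_le_tsum (fun i => ?_)
    (((summable_abs_rpow hp0 _).add (summable_abs_rpow hp0 _)).mul_left _)
  simpa using abs_add_rpow_add_abs_sub_rpow_le hp (x i) (y i)

variable [Fact (1 ≤ p)]

theorem norm_add_rpow_add_norm_sub_rpow_le_two_mul {q : ℝ} (hpq : p.toReal.HolderConjugate q)
    (hp : p.toReal ≤ 2) (x y : lp (fun _ : ι => ℝ) p) :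
    ‖x + y‖ ^ q + ‖x - y‖ ^ q ≤ 2 * (‖x‖ ^ p.toReal + ‖y‖ ^ p.toReal) ^ (q - 1) := by
  set P := p.toReal
  have hP := hpq.pos
  have hs := hpq.sub_one_pos
  have hs1 : P - 1 ≤ 1 := by linarith
  have hqs : q * (P - 1) = P := by rw [mul_comm, hpq.sub_one_mul_conj]
  have hPq : P * (q - 1) = q := by rw [mul_sub, mul_one, hpq.mul_eq_add]; ring
  have hinv : 1 / (P - 1) = q - 1 := by
    rw [div_eq_iff hs.ne']; linarith [hpq.mul_eq_add]
  have hpow : ∀ t : ℝ, (|t| ^ q) ^ (P - 1) = |t| ^ P := fun t => by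
    rw [← Real.rpow_mul (abs_nonneg t), hqs]
  have hnorm : ∀ z : lp (fun _ : ι => ℝ) p,
      ‖z‖ ^ q = (∑' i, (|z i| ^ q) ^ (P - 1)) ^ (1 / (P - 1)) := fun z => by
    rw [tsum_congr fun i => hpow (z i), ← norm_rpow_eq_tsum_abs hP,
      ← Real.rpow_mul (norm_nonneg z), hinv]
    exact congrArg _ hPq.symm
  have hsum : ∀ z : lp (fun _ : ι => ℝ) p, Summable fun i => (|z i| ^ q) ^ (P - 1) :=
    fun z => by simpa only [hpow] using summable_abs_rpow hP z
  have hpt : ∀ i, (|(x + y) i| ^ q + |(x - y) i| ^ q) ^ (P - 1) ≤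
      2 ^ (P - 1) * (|x i| ^ P + |y i| ^ P) := fun i => by
    simpa using abs_add_rpow_add_abs_sub_rpow_rpow_le hpq hp (x i) (y i)
  have hsum_xy : Summable fun i => 2 ^ (P - 1) * (|x i| ^ P + |y i| ^ P) :=
    ((summable_abs_rpow hP x).add (summable_abs_rpow hP y)).mul_left _
  calc ‖x + y‖ ^ q + ‖x - y‖ ^ q
      = (∑' i, (|(x + y) i| ^ q) ^ (P - 1)) ^ (1 / (P - 1))
        + (∑' i, (|(x - y) i| ^ q) ^ (P - 1)) ^ (1 / (P - 1)) := by rw [hnorm, hnorm]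
    _ ≤ (∑' i, (|(x + y) i| ^ q + |(x - y) i| ^ q) ^ (P - 1)) ^ (1 / (P - 1)) :=
        Real.Lp_add_ge_tsum_of_nonneg hs hs1 (fun i => by positivity) (fun i => by positivity)
          (hsum _) (hsum _)
    _ ≤ (∑' i, 2 ^ (P - 1) * (|x i| ^ P + |y i| ^ P)) ^ (1 / (P - 1)) := by
        refine Real.rpow_le_rpow (tsum_nonneg fun i => by positivity) ?_ (by positivity)
        exact (hsum_xy.of_nonneg_of_le (fun i => by positivity) hpt).tsum_le_tsum hpt hsum_xy
    _ = 2 * (‖x‖ ^ P + ‖y‖ ^ P) ^ (q - 1) := by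
        rw [tsum_mul_left, (summable_abs_rpow hP x).tsum_add (summable_abs_rpow hP y),
          ← norm_rpow_eq_tsum_abs hP, ← norm_rpow_eq_tsum_abs hP,
          Real.mul_rpow (by positivity) (by positivity), ← Real.rpow_mul zero_le_two,
          mul_one_div_cancel hs.ne', Real.rpow_one, hinv]

theorem norm_add_rpow_add_norm_sub_rpow_le_of_le_two {q : ℝ} (hpq : p.toReal.HolderConjugate q)
    (hp : p.toReal ≤ 2) (x y : lp (fun _ : ι => ℝ) p) :
    ‖x + y‖ ^ q + ‖x - y‖ ^ q ≤ 2 ^ (q - 1) * (‖x‖ ^ q + ‖y‖ ^ q) := by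
  have hq := hpq.two_le_iff.2 hp
  have hPq : p.toReal * (q - 1) = q := by rw [mul_sub, mul_one, hpq.mul_eq_add]; ring
  calc _ ≤ 2 * (‖x‖ ^ p.toReal + ‖y‖ ^ p.toReal) ^ (q - 1) :=
        norm_add_rpow_add_norm_sub_rpow_le_two_mul hpq hp x y
    _ ≤ 2 * (2 ^ (q - 1 - 1) * ((‖x‖ ^ p.toReal) ^ (q - 1) + (‖y‖ ^ p.toReal) ^ (q - 1))) := by
        gcongr
        exact Real.rpow_add_le_mul_rpow_add_rpow (by positivity) (by positivity) (by linarith)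
    _ = 2 ^ (q - 1) * (‖x‖ ^ q + ‖y‖ ^ q) := by
        rw [← Real.rpow_mul (norm_nonneg x), ← Real.rpow_mul (norm_nonneg y), hPq,
          Real.rpow_sub_one two_ne_zero (q - 1)]
        ring

end lp

theorem two_mul_norm_rpow_add_le_of_forall {E : Type*} [SeminormedAddCommGroup E] [NormedSpace ℝ E]
    {r : ℝ} (h : ∀ u v : E, ‖u + v‖ ^ r + ‖u - v‖ ^ r ≤ 2 ^ (r - 1) * (‖u‖ ^ r + ‖v‖ ^ r))
    (x y : E) : 2 * (‖x‖ ^ r + ‖y‖ ^ r) ≤ ‖x + y‖ ^ r + ‖x - y‖ ^ r := by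
  have hsum : x + y + (x - y) = (2 : ℝ) • x := by rw [two_smul]; abel
  have hdiff : x + y - (x - y) = (2 : ℝ) • y := by rw [two_smul]; abel
  have h2 : ∀ z : E, ‖(2 : ℝ) • z‖ ^ r = 2 * 2 ^ (r - 1) * ‖z‖ ^ r := fun z => by
    rw [norm_smul, Real.norm_two, Real.mul_rpow zero_le_two (norm_nonneg z),
      Real.rpow_sub_one two_ne_zero]
    field_simp
  have := h (x + y) (x - y)
  rw [hsum, hdiff, h2, h2] at this
  have h2pos : (0 : ℝ) < 2 ^ (r - 1) := by positivity
  nlinarith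

/-- **Clarkson inequality, part 1.** For `1 < p < ∞`, with `p'` the conjugate index of `p`,
`r = min (p, p')` and `r'` the conjugate index of `r`, for all `x, y ∈ ℓ_p`:
`2 (‖x‖^r' + ‖y‖^r') ≤ ‖x+y‖^r' + ‖x-y‖^r' ≤ 2^(r'-1) (‖x‖^r' + ‖y‖^r')`. -/
theorem clarkson_inequality_one (p : ℝ) (hp : 1 < p)
    (p' r r' : ℝ) (hp' : p' = p / (p - 1)) (hr : r = min p p') (hr' : r' = r / (r - 1)) :
    haveI : Fact ((1 : ℝ≥0∞) ≤ ENNReal.ofReal p) := ⟨ENNReal.one_le_ofReal.mpr hp.le⟩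
    ∀ x y : lp (fun _ : ℕ => ℝ) (ENNReal.ofReal p),
      2 * (‖x‖ ^ r' + ‖y‖ ^ r') ≤ ‖x + y‖ ^ r' + ‖x - y‖ ^ r' ∧
      ‖x + y‖ ^ r' + ‖x - y‖ ^ r' ≤ (2 : ℝ) ^ (r' - 1) * (‖x‖ ^ r' + ‖y‖ ^ r') := by
  have : Fact ((1 : ℝ≥0∞) ≤ ENNReal.ofReal p) := ⟨ENNReal.one_le_ofReal.mpr hp.le⟩
  have hP : (ENNReal.ofReal p).toReal = p := ENNReal.toReal_ofReal (by linarith)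
  have hpq : p.HolderConjugate p' := (Real.holderConjugate_iff_eq_conjExponent hp).2 hp'
  have hupper : ∀ x y : lp (fun _ : ℕ => ℝ) (ENNReal.ofReal p),
      ‖x + y‖ ^ r' + ‖x - y‖ ^ r' ≤ 2 ^ (r' - 1) * (‖x‖ ^ r' + ‖y‖ ^ r') := by
    rcases le_total p 2 with hp2 | hp2
    · have hr'p' : r' = p' := by
        rw [hr', hr, min_eq_left (hp2.trans (hpq.two_le_iff.2 hp2)), ← hp']
      rw [hr'p']
      exact lp.norm_add_rpow_add_norm_sub_rpow_le_of_le_two (by rwa [hP]) (by rwa [hP])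
    · have hr'p : r' = (ENNReal.ofReal p).toReal := by
        rw [hr', hr, min_eq_right ((hpq.symm.two_le_iff.1 hp2).trans hp2),
          ← hpq.symm.conjugate_eq, hP]
      rw [hr'p]
      exact lp.norm_add_rpow_add_norm_sub_rpow_le (by rwa [hP])
  exact fun x y => ⟨two_mul_norm_rpow_add_le_of_forall hupper x y, hupper x y⟩
end

section
/- Let 1 < p < r < 2 and let x, y ∈ ℓ_p satisfy ‖x‖_p^p + ‖x‖_r^r = 1 and ‖y‖_p^p + ‖y‖_r^r = 1. Then it is impossible that both (1/2)·‖x+y‖_p^p + 2^{−r/p}·‖x+y‖_r^r = 1 and (1/2)·‖x−y‖_p^p + 2^{−r/p}·‖x−y‖_r^r = 1 hold. (Equivalently: x+y and x−y cannot both have norm 2^{1/p} in the Orlicz sequence space generated by M(t) = t^p + t^r.) -/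
open scoped ENNReal NNReal

private lemma real_subadd_rpow {s : ℝ} (hs0 : 0 ≤ s) (hs1 : s ≤ 1) {u v : ℝ}
    (hu : 0 ≤ u) (hv : 0 ≤ v) : (u + v) ^ s ≤ u ^ s + v ^ s := by
  lift u to ℝ≥0 using hu
  lift v to ℝ≥0 using hv
  exact_mod_cast NNReal.rpow_add_le_add_rpow u v hs0 hs1

private lemma nnreal_pm {s : ℝ} (hs0 : 0 < s) (hs1 : s ≤ 1) (u v : ℝ≥0) :
    u ^ s + v ^ s ≤ 2 ^ (1 - s) * (u + v) ^ s := by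
  have hp : (1 : ℝ) ≤ 1 / s := by
    rw [le_div_iff₀ hs0, one_mul]
    exact hs1
  have h := NNReal.rpow_add_le_mul_rpow_add_rpow (u ^ s) (v ^ s) hp
  rw [← NNReal.rpow_mul u, ← NNReal.rpow_mul v, mul_one_div, div_self hs0.ne',
    NNReal.rpow_one, NNReal.rpow_one] at h
  have h2 := NNReal.rpow_le_rpow h hs0.le
  rw [← NNReal.rpow_mul, one_div, inv_mul_cancel₀ hs0.ne', NNReal.rpow_one,
    NNReal.mul_rpow, ← NNReal.rpow_mul] at h2
  have he : (s⁻¹ - 1) * s = 1 - s := by field_simp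
  rwa [he] at h2

private lemma real_pm {s : ℝ} (hs0 : 0 < s) (hs1 : s ≤ 1) {u v : ℝ}
    (hu : 0 ≤ u) (hv : 0 ≤ v) : u ^ s + v ^ s ≤ 2 ^ (1 - s) * (u + v) ^ s := by
  lift u to ℝ≥0 using hu
  lift v to ℝ≥0 using hv
  exact_mod_cast nnreal_pm hs0 hs1 u v

/-- Pointwise Clarkson-type inequality for `0 < q ≤ 2`. -/
private lemma clarkson_pt {q : ℝ} (hq0 : 0 < q) (hq2 : q ≤ 2) (a b : ℝ) :
    |a + b| ^ q + |a - b| ^ q ≤ 2 * (|a| ^ q + |b| ^ q) := by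
  set s := q / 2 with hs
  have hs0 : 0 < s := by positivity
  have hs1 : s ≤ 1 := by rw [hs]; linarith
  have key : ∀ z : ℝ, |z| ^ q = (z ^ 2) ^ s := by
    intro z
    rw [← sq_abs, ← Real.rpow_natCast |z| 2, ← Real.rpow_mul (abs_nonneg z)]
    congr 1
    rw [hs]; ring
  rw [key (a + b), key (a - b), key a, key b]
  have h1 : ((a + b) ^ 2) ^ s + ((a - b) ^ 2) ^ s
      ≤ 2 ^ (1 - s) * ((a + b) ^ 2 + (a - b) ^ 2) ^ s :=
    real_pm hs0 hs1 (by positivity) (by positivity)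
  have h2 : ((a + b) ^ 2 + (a - b) ^ 2 : ℝ) = 2 * (a ^ 2 + b ^ 2) := by ring
  have h3 : ((2 : ℝ) * (a ^ 2 + b ^ 2)) ^ s = 2 ^ s * (a ^ 2 + b ^ 2) ^ s :=
    Real.mul_rpow (by norm_num) (by positivity)
  have h4 : (a ^ 2 + b ^ 2 : ℝ) ^ s ≤ (a ^ 2) ^ s + (b ^ 2) ^ s :=
    real_subadd_rpow hs0.le hs1 (by positivity) (by positivity)
  have h5 : (2 : ℝ) ^ (1 - s) * 2 ^ s = 2 := by
    rw [← Real.rpow_add (by norm_num : (0:ℝ) < 2)]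
    norm_num
  calc ((a + b) ^ 2) ^ s + ((a - b) ^ 2) ^ s
      ≤ 2 ^ (1 - s) * ((a + b) ^ 2 + (a - b) ^ 2) ^ s := h1
    _ = 2 ^ (1 - s) * (2 ^ s * (a ^ 2 + b ^ 2) ^ s) := by rw [h2, h3]
    _ = 2 * (a ^ 2 + b ^ 2) ^ s := by rw [← mul_assoc, h5]
    _ ≤ 2 * ((a ^ 2) ^ s + (b ^ 2) ^ s) := by linarith

/-- If `1 < p < r < 2`, `x, y ∈ ℓ_p` and `‖x‖_p^p + ‖x‖_r^r = 1`, `‖y‖_p^p + ‖y‖_r^r = 1`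
(so `x`, `y` are unit vectors of the Orlicz space generated by `M(t) = t^p + t^r`), then
`x + y` and `x - y` cannot both have Orlicz norm `2^{1/p}`, i.e. the two equalities
`(1/2)‖x±y‖_p^p + 2^{-r/p}‖x±y‖_r^r = 1` cannot both hold. -/
theorem orlicz_not_both_isometric (p r : ℝ) (hp : 1 < p) (hpr : p < r) (hr : r < 2)
    (x y : ℕ → ℝ)
    (hx : Memℓp x (ENNReal.ofReal p)) (hy : Memℓp y (ENNReal.ofReal p))
    (hx1 : (∑' i, |x i| ^ p) + (∑' i, |x i| ^ r) = 1)
    (hy1 : (∑' i, |y i| ^ p) + (∑' i, |y i| ^ r) = 1) :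
    ¬ ((1 / 2) * (∑' i, |x i + y i| ^ p) +
          (2 : ℝ) ^ (-(r / p)) * (∑' i, |x i + y i| ^ r) = 1 ∧
       (1 / 2) * (∑' i, |x i - y i| ^ p) +
          (2 : ℝ) ^ (-(r / p)) * (∑' i, |x i - y i| ^ r) = 1) := by
  rintro ⟨h1, h2⟩
  have hp0 : (0 : ℝ) < p := by linarith
  have hr0 : (0 : ℝ) < r := by linarith
  have htp : (ENNReal.ofReal p).toReal = p := ENNReal.toReal_ofReal hp0.le
  have htr : (ENNReal.ofReal r).toReal = r := ENNReal.toReal_ofReal hr0.le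
  have sumP : ∀ z : ℕ → ℝ, Memℓp z (ENNReal.ofReal p) → Summable fun i => |z i| ^ p := by
    intro z hz
    have := hz.summable (by rw [htp]; exact hp0)
    simpa [htp, Real.norm_eq_abs] using this
  have sumR : ∀ z : ℕ → ℝ, Memℓp z (ENNReal.ofReal p) → Summable fun i => |z i| ^ r := by
    intro z hz
    have hz' : Memℓp z (ENNReal.ofReal r) :=
      hz.of_exponent_ge (ENNReal.ofReal_le_ofReal hpr.le)
    have := hz'.summable (by rw [htr]; exact hr0)
    simpa [htr, Real.norm_eq_abs] using this
  have hxy : Memℓp (x + y) (ENNReal.ofReal p) := hx.add hy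
  have hxy' : Memℓp (x - y) (ENNReal.ofReal p) := hx.sub hy
  have clark : ∀ q : ℝ, 0 < q → q ≤ 2 →
      Summable (fun i => |x i| ^ q) → Summable (fun i => |y i| ^ q) →
      Summable (fun i => |x i + y i| ^ q) → Summable (fun i => |x i - y i| ^ q) →
      (∑' i, |x i + y i| ^ q) + (∑' i, |x i - y i| ^ q)
        ≤ 2 * ((∑' i, |x i| ^ q) + (∑' i, |y i| ^ q)) := by
    intro q hq0 hq2 sx sy sa sb
    rw [← Summable.tsum_add sa sb]
    calc (∑' i, (|x i + y i| ^ q + |x i - y i| ^ q))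
        ≤ ∑' i, 2 * (|x i| ^ q + |y i| ^ q) :=
          Summable.tsum_le_tsum (fun i => clarkson_pt hq0 hq2 (x i) (y i)) (sa.add sb)
            ((sx.add sy).mul_left 2)
      _ = 2 * ((∑' i, |x i| ^ q) + (∑' i, |y i| ^ q)) := by
          rw [tsum_mul_left, Summable.tsum_add sx sy]
  have iP : (∑' i, |x i + y i| ^ p) + (∑' i, |x i - y i| ^ p)
      ≤ 2 * ((∑' i, |x i| ^ p) + (∑' i, |y i| ^ p)) :=
    clark p hp0 (by linarith) (sumP x hx) (sumP y hy) (sumP _ hxy) (sumP _ hxy')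
  have iR : (∑' i, |x i + y i| ^ r) + (∑' i, |x i - y i| ^ r)
      ≤ 2 * ((∑' i, |x i| ^ r) + (∑' i, |y i| ^ r)) :=
    clark r hr0 hr.le (sumR x hx) (sumR y hy) (sumR _ hxy) (sumR _ hxy')
  -- positivity of ∑' |x i| ^ r
  have hTx : 0 < ∑' i, |x i| ^ r := by
    rcases (tsum_nonneg fun i => Real.rpow_nonneg (abs_nonneg _) r).lt_or_eq with h | h
    · exact h
    · exfalso
      have hx0 : ∀ i, x i = 0 := by
        intro i
        have hle : |x i| ^ r ≤ ∑' j, |x j| ^ r :=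
          Summable.le_tsum (sumR x hx) i fun j _ => Real.rpow_nonneg (abs_nonneg _) r
        have : |x i| ^ r = 0 := le_antisymm (h ▸ hle) (Real.rpow_nonneg (abs_nonneg _) r)
        have := (Real.rpow_eq_zero (abs_nonneg _) hr0.ne').mp this
        exact abs_eq_zero.mp this
      have e1 : (∑' i, |x i| ^ p) = 0 := by
        simp [hx0, Real.zero_rpow hp0.ne']
      have e2 : (∑' i, |x i| ^ r) = 0 := by
        simp [hx0, Real.zero_rpow hr0.ne']
      rw [e1, e2] at hx1
      norm_num at hx1
  have hTy : 0 ≤ ∑' i, |y i| ^ r := tsum_nonneg fun i => Real.rpow_nonneg (abs_nonneg _) r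
  -- arithmetic
  set c : ℝ := (2 : ℝ) ^ (-(r / p)) with hc
  have hc0 : 0 < c := Real.rpow_pos_of_pos (by norm_num) _
  have h2c : 2 * c < 1 := by
    have he : (2 : ℝ) * c = 2 ^ (1 - r / p) := by
      rw [hc, sub_eq_add_neg, Real.rpow_add (by norm_num : (0:ℝ) < 2), Real.rpow_one]
    rw [he]
    apply Real.rpow_lt_one_of_one_lt_of_neg (by norm_num)
    have : 1 < r / p := (one_lt_div hp0).2 hpr
    linarith
  have k1 : c * ((∑' i, |x i + y i| ^ r) + (∑' i, |x i - y i| ^ r))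
      ≤ c * (2 * ((∑' i, |x i| ^ r) + (∑' i, |y i| ^ r))) :=
    mul_le_mul_of_nonneg_left iR hc0.le
  nlinarith [k1, h2c, iP, hTx, hTy, hc0]
end

section
/- (Strict convexity of the modular sequence space) Let 2 < p < ∞ and let (p_i)_{i∈ℕ} be a sequence of reals with 2 < p_i < p for every i. Let u, v ∈ ℓ_p with u ≠ v satisfy Σᵢ(|uᵢ|^p + |uᵢ|^{p_i}) = 1 and Σᵢ(|vᵢ|^p + |vᵢ|^{p_i}) = 1 (i.e., u and v are distinct unit vectors of the modular sequence space ℓ_{{M_i}} with M_i(t) = t^p + t^{p_i}). Then the modular norm of u + v is strictly less than 2, i.e., inf { ρ > 0 : Σᵢ ((|uᵢ+vᵢ|/ρ)^p + (|uᵢ+vᵢ|/ρ)^{p_i}) ≤ 1 } < 2. -/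
open scoped ENNReal

private lemma rpow_half_le {q a b : ℝ} (hq : 1 ≤ q) (ha : 0 ≤ a) (hb : 0 ≤ b) :
    ((a + b) / 2) ^ q ≤ (a ^ q + b ^ q) / 2 := by
  have h := (convexOn_rpow hq).2 (Set.mem_Ici.mpr ha) (Set.mem_Ici.mpr hb)
    (by norm_num : (0:ℝ) ≤ 1/2) (by norm_num : (0:ℝ) ≤ 1/2) (by norm_num)
  simp only [smul_eq_mul] at h
  have e : (a + b) / 2 = 1/2 * a + 1/2 * b := by ring
  rw [e]
  linarith [h]

private lemma rpow_half_lt {q a b : ℝ} (hq : 1 < q) (ha : 0 ≤ a) (hb : 0 ≤ b)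
    (hab : a ≠ b) : ((a + b) / 2) ^ q < (a ^ q + b ^ q) / 2 := by
  have h := (strictConvexOn_rpow hq).2 (Set.mem_Ici.mpr ha) (Set.mem_Ici.mpr hb)
    hab (by norm_num : (0:ℝ) < 1/2) (by norm_num : (0:ℝ) < 1/2) (by norm_num)
  simp only [smul_eq_mul] at h
  have e : (a + b) / 2 = 1/2 * a + 1/2 * b := by ring
  rw [e]
  linarith [h]

/-- **Strict convexity of the modular sequence space.** Let `2 < p < ∞`, `2 < pᵢ < p`,
and let `u ≠ v` be unit vectors of the modular sequence space with `Mᵢ(t) = t^p + t^{pᵢ}`,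
i.e. `Σᵢ (|uᵢ|^p + |uᵢ|^{pᵢ}) = 1` and similarly for `v`. Then the modular norm of `u + v`
is strictly less than `2`. -/
theorem modular_space_strictly_convex (p : ℝ) (hp : 2 < p) (P : ℕ → ℝ)
    (hP : ∀ i, 2 < P i ∧ P i < p) (u v : ℕ → ℝ) (huv : u ≠ v)
    (hu : Memℓp u (ENNReal.ofReal p)) (hv : Memℓp v (ENNReal.ofReal p))
    (hu1 : (∑' i, (|u i| ^ p + |u i| ^ (P i))) = 1)
    (hv1 : (∑' i, (|v i| ^ p + |v i| ^ (P i))) = 1) :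
    sInf {ρ : ℝ | 0 < ρ ∧
      Summable (fun i => (|u i + v i| / ρ) ^ p + (|u i + v i| / ρ) ^ (P i)) ∧
      (∑' i, ((|u i + v i| / ρ) ^ p + (|u i + v i| / ρ) ^ (P i))) ≤ 1} < 2 := by
  have hp1 : (1:ℝ) ≤ p := by linarith
  have hp0 : (0:ℝ) < p := by linarith
  set gu : ℕ → ℝ := fun i => |u i| ^ p + |u i| ^ (P i) with hgu
  set gv : ℕ → ℝ := fun i => |v i| ^ p + |v i| ^ (P i) with hgv
  set f : ℕ → ℝ := fun i => (|u i + v i| / 2) ^ p + (|u i + v i| / 2) ^ (P i) with hf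
  have hsu : Summable gu := by
    by_contra h
    rw [tsum_eq_zero_of_not_summable h] at hu1
    norm_num at hu1
  have hsv : Summable gv := by
    by_contra h
    rw [tsum_eq_zero_of_not_summable h] at hv1
    norm_num at hv1
  -- pointwise bound
  have hle : ∀ i, f i ≤ (gu i + gv i) / 2 := by
    intro i
    have hPi := hP i
    have ha : (0:ℝ) ≤ |u i| := abs_nonneg _
    have hb : (0:ℝ) ≤ |v i| := abs_nonneg _
    have htab : |u i + v i| / 2 ≤ (|u i| + |v i|) / 2 := by
      have := abs_add_le (u i) (v i); linarith
    have ht0 : (0:ℝ) ≤ |u i + v i| / 2 := by positivity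
    have h1 : (|u i + v i| / 2) ^ p ≤ ((|u i| + |v i|) / 2) ^ p :=
      Real.rpow_le_rpow ht0 htab (le_of_lt hp0)
    have h2 : (|u i + v i| / 2) ^ (P i) ≤ ((|u i| + |v i|) / 2) ^ (P i) :=
      Real.rpow_le_rpow ht0 htab (by linarith [hPi.1])
    have h3 := rpow_half_le hp1 ha hb
    have h4 := rpow_half_le (q := P i) (by linarith [hPi.1]) ha hb
    simp only [hf, hgu, hgv]
    linarith
  -- strict at some index
  obtain ⟨j, hj⟩ : ∃ j, u j ≠ v j := Function.ne_iff.mp huv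
  have hlt : f j < (gu j + gv j) / 2 := by
    have hPj := hP j
    have ha : (0:ℝ) ≤ |u j| := abs_nonneg _
    have hb : (0:ℝ) ≤ |v j| := abs_nonneg _
    by_cases hab : |u j| = |v j|
    · -- then u j = - v j, u j ≠ 0
      have huj : u j = -v j := by
        rcases abs_eq_abs.mp hab with h | h
        · exact absurd h hj
        · exact h
      have hne0 : u j ≠ 0 := by
        intro h0
        apply hj
        rw [h0] at huj ⊢
        linarith [huj]
      have hsum0 : u j + v j = 0 := by rw [huj]; ring
      have hfj : f j = 0 := by
        simp only [hf, hsum0, abs_zero, zero_div]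
        rw [Real.zero_rpow (by linarith : p ≠ 0),
          Real.zero_rpow (by linarith [hPj.1] : P j ≠ 0)]
        ring
      have hpos : 0 < |u j| ^ p := Real.rpow_pos_of_pos (abs_pos.mpr hne0) p
      have hpos2 : 0 < |u j| ^ (P j) := Real.rpow_pos_of_pos (abs_pos.mpr hne0) (P j)
      have hnn1 : 0 ≤ |v j| ^ p := Real.rpow_nonneg hb p
      have hnn2 : 0 ≤ |v j| ^ (P j) := Real.rpow_nonneg hb (P j)
      rw [hfj]
      simp only [hgu, hgv]
      linarith
    · have htab : |u j + v j| / 2 ≤ (|u j| + |v j|) / 2 := by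
        have := abs_add_le (u j) (v j); linarith
      have ht0 : (0:ℝ) ≤ |u j + v j| / 2 := by positivity
      have h1 : (|u j + v j| / 2) ^ p ≤ ((|u j| + |v j|) / 2) ^ p :=
        Real.rpow_le_rpow ht0 htab (le_of_lt hp0)
      have h2 : (|u j + v j| / 2) ^ (P j) ≤ ((|u j| + |v j|) / 2) ^ (P j) :=
        Real.rpow_le_rpow ht0 htab (by linarith [hPj.1])
      have h3 := rpow_half_lt (by linarith : 1 < p) ha hb hab
      have h4 := rpow_half_le (q := P j) (by linarith [hPj.1]) ha hb
      simp only [hf, hgu, hgv]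
      linarith
  have hfnn : ∀ i, 0 ≤ f i := by
    intro i
    have : (0:ℝ) ≤ |u i + v i| / 2 := by positivity
    have h1 := Real.rpow_nonneg this p
    have h2 := Real.rpow_nonneg this (P i)
    simp only [hf]; linarith
  have hsg : Summable (fun i => (gu i + gv i) / 2) := ((hsu.add hsv).div_const 2)
  have hsf : Summable f := Summable.of_nonneg_of_le hfnn hle hsg
  have hS : ∑' i, f i < 1 := by
    have h := Summable.tsum_lt_tsum hle hlt hsf hsg
    have : ∑' i, (gu i + gv i) / 2 = 1 := by
      rw [tsum_div_const, Summable.tsum_add hsu hsv, hu1, hv1]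
      norm_num
    linarith
  set S := ∑' i, f i with hSdef
  have hS0 : 0 ≤ S := tsum_nonneg hfnn
  set T : ℝ := max S (1/2) with hT
  have hT0 : 0 < T := lt_max_of_lt_right (by norm_num)
  have hT1 : T < 1 := max_lt hS (by norm_num)
  have hST : S ≤ T := le_max_left _ _
  set lam : ℝ := (1 / T) ^ (1 / p) with hlam
  have hTinv : 1 < 1 / T := by
    rw [lt_div_iff₀ hT0]; linarith
  have hlam1 : 1 < lam := by
    rw [hlam]
    exact Real.one_lt_rpow_iff_of_pos (by positivity) |>.mpr (Or.inl ⟨hTinv, by positivity⟩)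
  have hlam0 : 0 < lam := by linarith
  have hlamp : lam ^ p = 1 / T := by
    rw [hlam, ← Real.rpow_mul (by positivity), one_div p, inv_mul_cancel₀ (ne_of_gt hp0),
      Real.rpow_one]
  set ρ : ℝ := 2 / lam with hρ
  have hρ0 : 0 < ρ := by positivity
  have hρ2 : ρ < 2 := by
    rw [hρ, div_lt_iff₀ hlam0]; linarith
  -- membership
  have hterm : ∀ i, (|u i + v i| / ρ) ^ p + (|u i + v i| / ρ) ^ (P i) ≤ lam ^ p * f i := by
    intro i
    have hPi := hP i
    have hw0 : (0:ℝ) ≤ |u i + v i| := abs_nonneg _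
    have hrw : |u i + v i| / ρ = lam * (|u i + v i| / 2) := by
      rw [hρ]; field_simp
    have ht0 : (0:ℝ) ≤ |u i + v i| / 2 := by positivity
    rw [hrw, Real.mul_rpow (le_of_lt hlam0) ht0, Real.mul_rpow (le_of_lt hlam0) ht0]
    have hle1 : lam ^ (P i) ≤ lam ^ p :=
      Real.rpow_le_rpow_of_exponent_le (le_of_lt hlam1) (le_of_lt hPi.2)
    have h2 := Real.rpow_nonneg ht0 (P i)
    have h3 := Real.rpow_nonneg ht0 p
    have h4 : (0:ℝ) ≤ lam ^ p := Real.rpow_nonneg (le_of_lt hlam0) p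
    simp only [hf]
    nlinarith [mul_le_mul_of_nonneg_right hle1 h2]
  have htermnn : ∀ i, 0 ≤ (|u i + v i| / ρ) ^ p + (|u i + v i| / ρ) ^ (P i) := by
    intro i
    have : (0:ℝ) ≤ |u i + v i| / ρ := by positivity
    have h1 := Real.rpow_nonneg this p
    have h2 := Real.rpow_nonneg this (P i)
    linarith
  have hsum : Summable (fun i => (|u i + v i| / ρ) ^ p + (|u i + v i| / ρ) ^ (P i)) :=
    Summable.of_nonneg_of_le htermnn hterm (hsf.mul_left _)
  have hts : (∑' i, ((|u i + v i| / ρ) ^ p + (|u i + v i| / ρ) ^ (P i))) ≤ 1 := by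
    have h1 := Summable.tsum_le_tsum hterm hsum (hsf.mul_left _)
    rw [tsum_mul_left, hlamp] at h1
    calc (∑' i, ((|u i + v i| / ρ) ^ p + (|u i + v i| / ρ) ^ (P i))) ≤ 1 / T * S := h1
      _ ≤ 1 / T * T := by
          apply mul_le_mul_of_nonneg_left hST (by positivity)
      _ = 1 := by field_simp
  have hmem : ρ ∈ {ρ : ℝ | 0 < ρ ∧
      Summable (fun i => (|u i + v i| / ρ) ^ p + (|u i + v i| / ρ) ^ (P i)) ∧
      (∑' i, ((|u i + v i| / ρ) ^ p + (|u i + v i| / ρ) ^ (P i))) ≤ 1} :=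
    ⟨hρ0, hsum, hts⟩
  have hbdd : BddBelow {ρ : ℝ | 0 < ρ ∧
      Summable (fun i => (|u i + v i| / ρ) ^ p + (|u i + v i| / ρ) ^ (P i)) ∧
      (∑' i, ((|u i + v i| / ρ) ^ p + (|u i + v i| / ρ) ^ (P i))) ≤ 1} :=
    ⟨0, fun x hx => le_of_lt hx.1⟩
  exact lt_of_le_of_lt (csInf_le hbdd hmem) hρ2
end

section
/- Let 2 < p < ∞ and let (p_i)_{i∈ℕ} be a sequence of reals with 2 < p_i < p for every i. Let x, y ∈ ℓ_p satisfy Σᵢ(|xᵢ|^p + |xᵢ|^{p_i}) = 1 and Σᵢ(|yᵢ|^p + |yᵢ|^{p_i}) = 1. Then the two equalities ‖x+y‖_p^p / 2^{p−1} + Σᵢ |xᵢ+yᵢ|^{p_i} / 2^{p_i(1−1/p)} = 1 and ‖x−y‖_p^p / 2^{p−1} + Σᵢ |xᵢ−yᵢ|^{p_i} / 2^{p_i(1−1/p)} = 1 cannot both hold. -/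
open scoped ENNReal

lemma aux1 {a b r : ℝ} (ha : 0 ≤ a) (hb : 0 ≤ b) (hr : 1 ≤ r) :
    a ^ r + b ^ r ≤ (a + b) ^ r := by
  have h := NNReal.add_rpow_le_rpow_add a.toNNReal b.toNNReal hr
  have h2 := NNReal.coe_le_coe.2 h
  rw [NNReal.coe_add, NNReal.coe_rpow, NNReal.coe_rpow, NNReal.coe_rpow,
    ← Real.toNNReal_add ha hb, Real.coe_toNNReal _ ha, Real.coe_toNNReal _ hb,
    Real.coe_toNNReal _ (by linarith)] at h2
  exact h2

lemma aux2 {a b r : ℝ} (ha : 0 ≤ a) (hb : 0 ≤ b) (hr : 1 ≤ r) :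
    (a + b) ^ r ≤ 2 ^ (r - 1) * (a ^ r + b ^ r) := by
  have h := NNReal.rpow_add_le_mul_rpow_add_rpow a.toNNReal b.toNNReal hr
  have h2 := NNReal.coe_le_coe.2 h
  push_cast at h2
  rw [Real.coe_toNNReal _ ha, Real.coe_toNNReal _ hb] at h2
  exact h2

lemma rpow_sq_half (w : ℝ) (hw : 0 ≤ w) (r : ℝ) : w ^ r = (w ^ (2:ℝ)) ^ (r / 2) := by
  rw [← Real.rpow_mul hw]; ring_nf

lemma clarkson {a b r : ℝ} (hr : 2 ≤ r) :
    |a + b| ^ r + |a - b| ^ r ≤ 2 ^ (r - 1) * (|a| ^ r + |b| ^ r) := by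
  have hu0 : (0:ℝ) ≤ |a + b| := abs_nonneg _
  have hv0 : (0:ℝ) ≤ |a - b| := abs_nonneg _
  have ha0 : (0:ℝ) ≤ |a| := abs_nonneg _
  have hb0 : (0:ℝ) ≤ |b| := abs_nonneg _
  have hr2 : 1 ≤ r / 2 := by linarith
  have sq_nn : ∀ w : ℝ, (0:ℝ) ≤ |w| ^ (2:ℝ) := fun w => Real.rpow_nonneg (abs_nonneg w) _
  have par : |a + b| ^ (2:ℝ) + |a - b| ^ (2:ℝ) = 2 * (|a| ^ (2:ℝ) + |b| ^ (2:ℝ)) := by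
    rw [Real.rpow_two, Real.rpow_two, Real.rpow_two, Real.rpow_two,
      sq_abs, sq_abs, sq_abs, sq_abs]; ring
  calc |a + b| ^ r + |a - b| ^ r
      = (|a + b| ^ (2:ℝ)) ^ (r/2) + (|a - b| ^ (2:ℝ)) ^ (r/2) := by
        rw [← rpow_sq_half _ hu0, ← rpow_sq_half _ hv0]
    _ ≤ (|a + b| ^ (2:ℝ) + |a - b| ^ (2:ℝ)) ^ (r/2) := aux1 (sq_nn _) (sq_nn _) hr2
    _ = (2 * (|a| ^ (2:ℝ) + |b| ^ (2:ℝ))) ^ (r/2) := by rw [par]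
    _ = 2 ^ (r/2) * (|a| ^ (2:ℝ) + |b| ^ (2:ℝ)) ^ (r/2) :=
        Real.mul_rpow (by norm_num) (by positivity)
    _ ≤ 2 ^ (r/2) * (2 ^ (r/2 - 1) * ((|a| ^ (2:ℝ)) ^ (r/2) + (|b| ^ (2:ℝ)) ^ (r/2))) := by
        have := aux2 (sq_nn a) (sq_nn b) hr2
        have h2 : (0:ℝ) ≤ (2:ℝ) ^ (r/2) := by positivity
        exact mul_le_mul_of_nonneg_left this h2
    _ = 2 ^ (r - 1) * (|a| ^ r + |b| ^ r) := by
        rw [← rpow_sq_half _ ha0, ← rpow_sq_half _ hb0, ← mul_assoc,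
          ← Real.rpow_add (by norm_num : (0:ℝ) < 2)]
        ring_nf

/-- Let `2 < p < ∞`, `2 < pᵢ < p`, and let `x, y` be unit vectors of the modular sequence
space with `Mᵢ(t) = t^p + t^{pᵢ}`, i.e. `Σᵢ (|xᵢ|^p + |xᵢ|^{pᵢ}) = 1` and similarly for `y`.
Then `x + y` and `x - y` cannot both have modular norm `2^{1-1/p}`, i.e. the equalities
`‖x±y‖_p^p / 2^{p-1} + Σᵢ |xᵢ±yᵢ|^{pᵢ} / 2^{pᵢ(1-1/p)} = 1` cannot both hold. -/
theorem modular_not_both_isometric (p : ℝ) (hp : 2 < p) (P : ℕ → ℝ)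
    (hP : ∀ i, 2 < P i ∧ P i < p) (x y : ℕ → ℝ)
    (hx : Memℓp x (ENNReal.ofReal p)) (hy : Memℓp y (ENNReal.ofReal p))
    (hx1 : (∑' i, (|x i| ^ p + |x i| ^ (P i))) = 1)
    (hy1 : (∑' i, (|y i| ^ p + |y i| ^ (P i))) = 1) :
    ¬ ((∑' i, |x i + y i| ^ p) / 2 ^ (p - 1) +
          (∑' i, |x i + y i| ^ (P i) / 2 ^ (P i * (1 - 1 / p))) = 1 ∧
       (∑' i, |x i - y i| ^ p) / 2 ^ (p - 1) +
          (∑' i, |x i - y i| ^ (P i) / 2 ^ (P i * (1 - 1 / p))) = 1) := by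
  rintro ⟨h1, h2⟩
  have hp0 : (0:ℝ) < p := by linarith
  have habs : ∀ (t r : ℝ), (0:ℝ) ≤ |t| ^ r :=
    fun t r => Real.rpow_nonneg (abs_nonneg _) _
  -- summability of the unit-sphere conditions
  have hxs : Summable (fun i => |x i| ^ p + |x i| ^ P i) := by
    by_contra h; rw [tsum_eq_zero_of_not_summable h] at hx1; norm_num at hx1
  have hys : Summable (fun i => |y i| ^ p + |y i| ^ P i) := by
    by_contra h; rw [tsum_eq_zero_of_not_summable h] at hy1; norm_num at hy1
  have hxp : Summable (fun i => |x i| ^ p) :=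
    hxs.of_nonneg_of_le (fun i => habs (x i) p) (fun i => le_add_of_nonneg_right (habs (x i) _))
  have hxP : Summable (fun i => |x i| ^ P i) :=
    hxs.of_nonneg_of_le (fun i => habs (x i) _) (fun i => le_add_of_nonneg_left (habs (x i) p))
  have hyp : Summable (fun i => |y i| ^ p) :=
    hys.of_nonneg_of_le (fun i => habs (y i) p) (fun i => le_add_of_nonneg_right (habs (y i) _))
  have hyP : Summable (fun i => |y i| ^ P i) :=
    hys.of_nonneg_of_le (fun i => habs (y i) _) (fun i => le_add_of_nonneg_left (habs (y i) p))
  -- pointwise Clarkson for exponent p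
  have hclp : ∀ i, |x i + y i| ^ p + |x i - y i| ^ p ≤ 2 ^ (p-1) * (|x i| ^ p + |y i| ^ p) :=
    fun i => clarkson hp.le
  -- pointwise Clarkson for exponent P i, divided
  have hcpos : ∀ i, (0:ℝ) < 2 ^ (P i * (1 - 1/p)) := fun i => Real.rpow_pos_of_pos two_pos _
  have hclP : ∀ i, |x i + y i| ^ P i / 2 ^ (P i * (1 - 1/p)) +
      |x i - y i| ^ P i / 2 ^ (P i * (1 - 1/p)) ≤
      2 ^ (P i / p - 1) * (|x i| ^ P i + |y i| ^ P i) := by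
    intro i
    have hcl := clarkson (a := x i) (b := y i) (hP i).1.le
    have hdiv : (2:ℝ) ^ (P i - 1) / 2 ^ (P i * (1 - 1/p)) = 2 ^ (P i / p - 1) := by
      rw [← Real.rpow_sub (by norm_num : (0:ℝ) < 2)]
      congr 1
      field_simp
      ring
    rw [← add_div]
    calc (|x i + y i| ^ P i + |x i - y i| ^ P i) / 2 ^ (P i * (1 - 1/p))
        ≤ 2 ^ (P i - 1) * (|x i| ^ P i + |y i| ^ P i) / 2 ^ (P i * (1 - 1/p)) :=
          div_le_div_of_nonneg_right hcl (hcpos i).le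
      _ = 2 ^ (P i / p - 1) * (|x i| ^ P i + |y i| ^ P i) := by
          rw [mul_div_right_comm, hdiv]
  have hd1 : ∀ i, (2:ℝ) ^ (P i / p - 1) < 1 := by
    intro i
    apply Real.rpow_lt_one_of_one_lt_of_neg (by norm_num)
    have : P i / p < 1 := (div_lt_one hp0).2 (hP i).2
    linarith
  have hdpos : ∀ i, (0:ℝ) < 2 ^ (P i / p - 1) := fun i => Real.rpow_pos_of_pos two_pos _
  -- summability of the plus/minus series
  have hfgsum : Summable (fun i => |x i + y i| ^ p + |x i - y i| ^ p) :=
    Summable.of_nonneg_of_le (fun i => add_nonneg (habs _ p) (habs _ p)) hclp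
      ((hxp.add hyp).mul_left _)
  have hfp : Summable (fun i => |x i + y i| ^ p) :=
    hfgsum.of_nonneg_of_le (fun i => habs _ p) (fun i => le_add_of_nonneg_right (habs _ p))
  have hgp : Summable (fun i => |x i - y i| ^ p) :=
    hfgsum.of_nonneg_of_le (fun i => habs _ p) (fun i => le_add_of_nonneg_left (habs _ p))
  have hdt : Summable (fun i => 2 ^ (P i / p - 1) * (|x i| ^ P i + |y i| ^ P i)) := by
    apply Summable.of_nonneg_of_le
      (fun i => mul_nonneg (hdpos i).le (add_nonneg (habs (x i) _) (habs (y i) _)))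
      (fun i => ?_) (hxP.add hyP)
    calc 2 ^ (P i / p - 1) * (|x i| ^ P i + |y i| ^ P i)
        ≤ 1 * (|x i| ^ P i + |y i| ^ P i) :=
          mul_le_mul_of_nonneg_right (hd1 i).le (add_nonneg (habs (x i) _) (habs (y i) _))
      _ = |x i| ^ P i + |y i| ^ P i := one_mul _
  have hdivnn : ∀ (t : ℝ) (i : ℕ), (0:ℝ) ≤ |t| ^ P i / 2 ^ (P i * (1 - 1/p)) :=
    fun t i => div_nonneg (habs t _) (hcpos i).le
  have hfgP : Summable (fun i => |x i + y i| ^ P i / 2 ^ (P i * (1 - 1/p)) +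
      |x i - y i| ^ P i / 2 ^ (P i * (1 - 1/p))) :=
    Summable.of_nonneg_of_le (fun i => add_nonneg (hdivnn _ i) (hdivnn _ i)) hclP hdt
  have hfP : Summable (fun i => |x i + y i| ^ P i / 2 ^ (P i * (1 - 1/p))) :=
    hfgP.of_nonneg_of_le (fun i => hdivnn _ i) (fun i => le_add_of_nonneg_right (hdivnn _ i))
  have hgP : Summable (fun i => |x i - y i| ^ P i / 2 ^ (P i * (1 - 1/p))) :=
    hfgP.of_nonneg_of_le (fun i => hdivnn _ i) (fun i => le_add_of_nonneg_left (hdivnn _ i))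
  -- key bound for the p-part
  have key1 : (∑' i, |x i + y i| ^ p) + (∑' i, |x i - y i| ^ p) ≤
      2 ^ (p-1) * ((∑' i, |x i| ^ p) + (∑' i, |y i| ^ p)) := by
    rw [← hfp.tsum_add hgp, ← hxp.tsum_add hyp, ← tsum_mul_left]
    exact hfgsum.tsum_le_tsum hclp ((hxp.add hyp).mul_left _)
  -- key bound for the P-part
  have key2 : (∑' i, |x i + y i| ^ P i / 2 ^ (P i * (1 - 1/p))) +
      (∑' i, |x i - y i| ^ P i / 2 ^ (P i * (1 - 1/p))) ≤
      ∑' i, 2 ^ (P i / p - 1) * (|x i| ^ P i + |y i| ^ P i) := by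
    rw [← hfP.tsum_add hgP]
    exact hfgP.tsum_le_tsum hclP hdt
  -- decompose the unit-sphere conditions
  have hxsplit : (∑' i, |x i| ^ p) + (∑' i, |x i| ^ P i) = 1 := by
    rw [← hxp.tsum_add hxP]; exact hx1
  have hysplit : (∑' i, |y i| ^ p) + (∑' i, |y i| ^ P i) = 1 := by
    rw [← hyp.tsum_add hyP]; exact hy1
  have htsum : (∑' i, (|x i| ^ P i + |y i| ^ P i)) = (∑' i, |x i| ^ P i) + (∑' i, |y i| ^ P i) :=
    hxP.tsum_add hyP
  -- from h1 + h2
  have h2pow : (0:ℝ) < 2 ^ (p-1) := Real.rpow_pos_of_pos two_pos _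
  have hdivle : (∑' i, |x i + y i| ^ p) / 2 ^ (p-1) + (∑' i, |x i - y i| ^ p) / 2 ^ (p-1) ≤
      (∑' i, |x i| ^ p) + (∑' i, |y i| ^ p) := by
    rw [← add_div, div_le_iff₀ h2pow]
    calc (∑' i, |x i + y i| ^ p) + (∑' i, |x i - y i| ^ p)
        ≤ 2 ^ (p-1) * ((∑' i, |x i| ^ p) + (∑' i, |y i| ^ p)) := key1
      _ = ((∑' i, |x i| ^ p) + (∑' i, |y i| ^ p)) * 2 ^ (p-1) := mul_comm _ _
  -- conclude Σ t ≤ Σ d t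
  have hmain : (∑' i, (|x i| ^ P i + |y i| ^ P i)) ≤
      ∑' i, 2 ^ (P i / p - 1) * (|x i| ^ P i + |y i| ^ P i) := by
    have e1 : (1 - 1/p) = (1 - 1/p) := rfl
    have := h1
    have := h2
    -- rewrite 1 - 1/p form consistency: statement uses (1 - 1 / p); ours the same
    nlinarith [key2, hdivle, hxsplit, hysplit, htsum, h1, h2]
  have hdiff : (∑' i, ((|x i| ^ P i + |y i| ^ P i) -
      2 ^ (P i / p - 1) * (|x i| ^ P i + |y i| ^ P i))) ≤ 0 := by
    rw [(hxP.add hyP).tsum_sub hdt]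
    linarith
  have hsub : Summable (fun i => (|x i| ^ P i + |y i| ^ P i) -
      2 ^ (P i / p - 1) * (|x i| ^ P i + |y i| ^ P i)) := (hxP.add hyP).sub hdt
  have hterm : ∀ i, (|x i| ^ P i + |y i| ^ P i) -
      2 ^ (P i / p - 1) * (|x i| ^ P i + |y i| ^ P i) = 0 := by
    intro i
    have hnn : ∀ j, (0:ℝ) ≤ (|x j| ^ P j + |y j| ^ P j) -
        2 ^ (P j / p - 1) * (|x j| ^ P j + |y j| ^ P j) := by
      intro j
      have := hd1 j
      nlinarith [habs (x j) (P j), habs (y j) (P j)]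
    have hle := hsub.le_tsum i (fun j _ => hnn j)
    have := hnn i
    linarith
  have hx0 : ∀ i, x i = 0 := by
    intro i
    have h := hterm i
    have hd := hd1 i
    have hnx := habs (x i) (P i)
    have hny := habs (y i) (P i)
    have ht0 : |x i| ^ P i + |y i| ^ P i = 0 := by nlinarith
    have : |x i| ^ P i = 0 := by linarith
    have hP0 : P i ≠ 0 := by have := (hP i).1; linarith
    have habs0 : |x i| = 0 := by
      by_contra habs0
      have : (0:ℝ) < |x i| := lt_of_le_of_ne (abs_nonneg _) (Ne.symm habs0)
      exact absurd ‹|x i| ^ P i = 0› (ne_of_gt (Real.rpow_pos_of_pos this _))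
    exact abs_eq_zero.mp habs0
  have : (∑' i, (|x i| ^ p + |x i| ^ P i)) = 0 := by
    have : ∀ i, |x i| ^ p + |x i| ^ P i = 0 := by
      intro i
      rw [hx0 i]
      simp [Real.zero_rpow (ne_of_gt hp0), Real.zero_rpow (by have := (hP i).1; intro h; linarith : P i ≠ 0)]
    rw [tsum_congr this, tsum_zero]
  rw [hx1] at this
  norm_num at this
end
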